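/- arXiv:1403.0234 — 2 statements merged into one kernel-verified Lean document; each statement's English description precedes it below -/
import Mathlib

section
/- Every free symplectic $\widetilde{\mathbb{R}}$-module $(V,\sigma)$ of finite rank $2n$ is symplectomorphic to the standard model $(T^*(\widetilde{\mathbb{R}}^n),\widetilde{\omega})$, i.e., there exists an $\widetilde{\mathbb{R}}$-linear isomorphism $f:V\to\widetilde{\mathbb{R}}^n\times\widetilde{\mathbb{R}}^n$ with $\widetilde{\omega}(f(v_1),f(v_2))=\sigma(v_1,v_2)$ for all $v_1,v_2\in V$. -/
open scoped BigOperators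

namespace Colombeau

/-- A net `(r_ε)` of real numbers is *moderate* if `|r_ε| = O(ε^{-N})` as `ε → 0⁺`
for some `N ∈ ℕ`. -/
def Moderate (r : ℝ → ℝ) : Prop :=
  ∃ N : ℕ, ∃ C : ℝ, 0 < C ∧ ∃ ε₀ : ℝ, 0 < ε₀ ∧
    ∀ ε : ℝ, 0 < ε → ε ≤ 1 → ε < ε₀ → |r ε| ≤ C / ε ^ N

/-- A net `(r_ε)` of real numbers is *negligible* if `|r_ε| = O(ε^m)` as `ε → 0⁺`
for every `m ∈ ℕ`. -/
def Negligible (r : ℝ → ℝ) : Prop :=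
  ∀ m : ℕ, ∃ C : ℝ, 0 < C ∧ ∃ ε₀ : ℝ, 0 < ε₀ ∧
    ∀ ε : ℝ, 0 < ε → ε ≤ 1 → ε < ε₀ → |r ε| ≤ C * ε ^ m

/-- The ring of moderate nets, as a subring of `ℝ → ℝ`. -/
def moderateSubring : Subring (ℝ → ℝ) where
  carrier := {r | Moderate r}
  zero_mem' := ⟨0, 1, one_pos, 1, one_pos, fun ε hε hε1 _ => by simp⟩
  one_mem' := ⟨0, 1, one_pos, 1, one_pos, fun ε hε hε1 _ => by simp⟩
  add_mem' := by
    rintro r s ⟨N1, C1, hC1, e1, he1, h1⟩ ⟨N2, C2, hC2, e2, he2, h2⟩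
    refine ⟨N1 + N2, C1 + C2, by positivity, min e1 e2, by positivity, ?_⟩
    intro ε hε hε1 hεe
    have k1 : |r ε| ≤ C1 / ε ^ (N1 + N2) := by
      refine (h1 ε hε hε1 (lt_of_lt_of_le hεe (min_le_left _ _))).trans ?_
      exact div_le_div_of_nonneg_left hC1.le (pow_pos hε _)
        (pow_le_pow_of_le_one hε.le hε1 (Nat.le_add_right _ _))
    have k2 : |s ε| ≤ C2 / ε ^ (N1 + N2) := by
      refine (h2 ε hε hε1 (lt_of_lt_of_le hεe (min_le_right _ _))).trans ?_
      exact div_le_div_of_nonneg_left hC2.le (pow_pos hε _)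
        (pow_le_pow_of_le_one hε.le hε1 (Nat.le_add_left _ _))
    calc |(r + s) ε| ≤ |r ε| + |s ε| := abs_add_le _ _
      _ ≤ C1 / ε ^ (N1 + N2) + C2 / ε ^ (N1 + N2) := add_le_add k1 k2
      _ = (C1 + C2) / ε ^ (N1 + N2) := (add_div _ _ _).symm
  mul_mem' := by
    rintro r s ⟨N1, C1, hC1, e1, he1, h1⟩ ⟨N2, C2, hC2, e2, he2, h2⟩
    refine ⟨N1 + N2, C1 * C2, by positivity, min e1 e2, by positivity, ?_⟩
    intro ε hε hε1 hεe
    have k1 := h1 ε hε hε1 (lt_of_lt_of_le hεe (min_le_left _ _))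
    have k2 := h2 ε hε hε1 (lt_of_lt_of_le hεe (min_le_right _ _))
    calc |(r * s) ε| = |r ε| * |s ε| := abs_mul _ _
      _ ≤ (C1 / ε ^ N1) * (C2 / ε ^ N2) :=
          mul_le_mul k1 k2 (abs_nonneg _) (by positivity)
      _ = (C1 * C2) / ε ^ (N1 + N2) := by rw [div_mul_div_comm, ← pow_add]
  neg_mem' := by
    rintro r ⟨N, C, hC, e0, he0, h⟩
    exact ⟨N, C, hC, e0, he0, fun ε hε hε1 hεe => by
      simpa using h ε hε hε1 hεe⟩

/-- The ideal of negligible nets inside the ring of moderate nets. -/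
def negligibleIdeal : Ideal moderateSubring where
  carrier := {r | Negligible (r : ℝ → ℝ)}
  zero_mem' := by
    intro m
    exact ⟨1, one_pos, 1, one_pos, fun ε hε hε1 _ => by
      simpa using (pow_nonneg hε.le m)⟩
  add_mem' := by
    intro r s hr hs m
    obtain ⟨C1, hC1, e1, he1, h1⟩ := hr m
    obtain ⟨C2, hC2, e2, he2, h2⟩ := hs m
    refine ⟨C1 + C2, by positivity, min e1 e2, by positivity, fun ε hε hε1 hεe => ?_⟩
    calc |((r : ℝ → ℝ) + (s : ℝ → ℝ)) ε| ≤ |(r : ℝ → ℝ) ε| + |(s : ℝ → ℝ) ε| := abs_add_le _ _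
      _ ≤ C1 * ε ^ m + C2 * ε ^ m :=
          add_le_add (h1 ε hε hε1 (lt_of_lt_of_le hεe (min_le_left _ _)))
            (h2 ε hε hε1 (lt_of_lt_of_le hεe (min_le_right _ _)))
      _ = (C1 + C2) * ε ^ m := (add_mul _ _ _).symm
  smul_mem' := by
    intro c x hx m
    obtain ⟨N, C1, hC1, e1, he1, h1⟩ := c.2
    obtain ⟨C2, hC2, e2, he2, h2⟩ := hx (m + N)
    refine ⟨C1 * C2, by positivity, min e1 e2, by positivity, fun ε hε hε1 hεe => ?_⟩
    have k1 := h1 ε hε hε1 (lt_of_lt_of_le hεe (min_le_left _ _))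
    have k2 := h2 ε hε hε1 (lt_of_lt_of_le hεe (min_le_right _ _))
    have hne : ε ^ N ≠ 0 := by positivity
    calc |((c : ℝ → ℝ) * (x : ℝ → ℝ)) ε| = |(c : ℝ → ℝ) ε| * |(x : ℝ → ℝ) ε| := abs_mul _ _
      _ ≤ (C1 / ε ^ N) * (C2 * ε ^ (m + N)) :=
          mul_le_mul k1 k2 (abs_nonneg _) (by positivity)
      _ = (C1 * C2) * ε ^ m := by field_simp [pow_add]; ring

/-- The ring `ℝ̃` of Colombeau generalized real numbers: moderate nets modulo
negligible nets. -/
def RTilde : Type := moderateSubring ⧸ negligibleIdeal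

noncomputable instance : CommRing RTilde :=
  inferInstanceAs (CommRing (moderateSubring ⧸ negligibleIdeal))

/-- A symplectic form on an `ℝ̃`-module `V`: an `ℝ̃`-bilinear form that is
skew-symmetric and non-degenerate. -/
structure IsSymplecticForm {V : Type*} [AddCommGroup V] [Module RTilde V]
    (σ : V →ₗ[RTilde] V →ₗ[RTilde] RTilde) : Prop where
  skew : ∀ v w : V, σ v w = - σ w v
  nondeg : ∀ v : V, (∀ w : V, σ v w = 0) → v = 0

end Colombeau

/-
Over `ℝ̃` every non-zero-divisor is a unit: if the class of `r` is not invertible, there are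
`ε_k → 0` with `|r ε_k| < ε_k ^ k`, and the indicator of `{ε_k}` is a nonzero annihilator of `r`.
As `ℝ̃` is also formally real, an annihilator `e` of `s = ∑ σ(b₀, b_j)²` (for a basis `b`) kills
every `σ(b₀, b_j)`, so `σ(e b₀, ·) = 0` and `e = 0`; hence `s` is a unit and
`w = s⁻¹ ∑ σ(b₀, b_j) b_j` satisfies `σ(b₀, w) = 1`. Taking, for each `ε`, the largest coordinate
of `w` as pivot completes `b₀, w` to a basis. The symplectic complement of the hyperbolic pair
`(b₀, w)` is then free of rank `2n - 2` and the restricted form is nondegenerate, so induction on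
`n` concludes.
-/

namespace Colombeau

open Filter Topology Module

section StandardForm

variable {R : Type*} [CommRing R]

def standardForm {n : ℕ} (p q : (Fin n → R) × (Fin n → R)) : R :=
  ∑ j, q.1 j * p.2 j - ∑ j, p.1 j * q.2 j

theorem standardForm_cons {n : ℕ} (a b a' b' : R) (x ξ y η : Fin n → R) :
    standardForm (Fin.cons a x, Fin.cons b ξ) (Fin.cons a' y, Fin.cons b' η) =
      a' * b - a * b' + standardForm (x, ξ) (y, η) := by
  simp only [standardForm, Fin.sum_univ_succ, Fin.cons_zero, Fin.cons_succ]
  ring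

end StandardForm

section OrthogonalOfPair

variable {R V : Type*} [CommRing R] [AddCommGroup V] [Module R V]

def orthogonalOfPair (B : V →ₗ[R] V →ₗ[R] R) (u w : V) : Submodule R V :=
  LinearMap.ker (B u) ⊓ LinearMap.ker (B w)

def projOrthogonalOfPair (B : V →ₗ[R] V →ₗ[R] R) (u w : V) : V →ₗ[R] V :=
  LinearMap.id - (B.flip w).smulRight u + (B.flip u).smulRight w

variable {B : V →ₗ[R] V →ₗ[R] R} {u w : V}

theorem mem_orthogonalOfPair {v : V} : v ∈ orthogonalOfPair B u w ↔ B u v = 0 ∧ B w v = 0 :=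
  Iff.rfl

theorem projOrthogonalOfPair_apply (v : V) :
    projOrthogonalOfPair B u w v = v - B v w • u + B v u • w :=
  rfl

variable (hB : B.IsAlt)
include hB

theorem projOrthogonalOfPair_of_mem {v : V} (hv : v ∈ orthogonalOfPair B u w) :
    projOrthogonalOfPair B u w v = v := by
  rw [mem_orthogonalOfPair] at hv
  rw [projOrthogonalOfPair_apply, ← hB.neg w v, ← hB.neg u v, hv.1, hv.2]
  simp

theorem eq_smul_add_smul_add_projOrthogonalOfPair (v : V) :
    v = B v w • u + B u v • w + projOrthogonalOfPair B u w v := by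
  rw [projOrthogonalOfPair_apply, ← hB.neg v u]
  module

variable (huw : B u w = 1)
include huw

theorem apply_swap_eq_neg_one : B w u = -1 := by
  rw [← hB.neg, huw]

theorem projOrthogonalOfPair_mem (v : V) :
    projOrthogonalOfPair B u w v ∈ orthogonalOfPair B u w := by
  simp only [mem_orthogonalOfPair, projOrthogonalOfPair_apply, map_add, map_sub, map_smul,
    smul_eq_mul, hB.self_eq_zero, huw, apply_swap_eq_neg_one hB huw]
  exact ⟨by linear_combination -hB.neg u v, by linear_combination -hB.neg w v⟩

theorem projOrthogonalOfPair_left : projOrthogonalOfPair B u w u = 0 := by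
  simp [projOrthogonalOfPair_apply, huw, hB.self_eq_zero]

theorem projOrthogonalOfPair_right : projOrthogonalOfPair B u w w = 0 := by
  simp [projOrthogonalOfPair_apply, apply_swap_eq_neg_one hB huw, hB.self_eq_zero]

theorem apply_eq_add_apply_projOrthogonalOfPair (v v' : V) :
    B v v' = B u v' * B v w - B u v * B v' w +
      B (projOrthogonalOfPair B u w v) (projOrthogonalOfPair B u w v') := by
  simp only [projOrthogonalOfPair_apply, map_add, map_sub, map_smul, LinearMap.add_apply,
    LinearMap.sub_apply, LinearMap.smul_apply, smul_eq_mul, hB.self_eq_zero, huw,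
    apply_swap_eq_neg_one hB huw]
  linear_combination -(B v' w) * hB.neg v u + (B v u) * hB.neg w v'

noncomputable def equivProdOrthogonalOfPair : V ≃ₗ[R] (R × R) × orthogonalOfPair B u w :=
  { ((B u).prod (B.flip w)).prod
      ((projOrthogonalOfPair B u w).codRestrict _ (projOrthogonalOfPair_mem hB huw)) with
    invFun := fun p => p.1.2 • u + p.1.1 • w + p.2
    left_inv := fun v => (eq_smul_add_smul_add_projOrthogonalOfPair hB v).symm
    right_inv := by
      rintro ⟨⟨a, b⟩, p, hp⟩
      have hp' := (mem_orthogonalOfPair.1 hp)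
      refine Prod.ext (Prod.ext ?_ ?_) (Subtype.ext ?_)
      · simp [hB.self_eq_zero, huw, hp'.1]
      · simp [hB.self_eq_zero, huw, ← hB.neg w p, hp'.2]
      · simp [projOrthogonalOfPair_left hB huw, projOrthogonalOfPair_right hB huw,
          projOrthogonalOfPair_of_mem hB hp] }

theorem separatingLeft_restrict_orthogonalOfPair (hsep : B.SeparatingLeft) :
    (B.compl₁₂ (orthogonalOfPair B u w).subtype
      (orthogonalOfPair B u w).subtype).SeparatingLeft := by
  rintro ⟨p, hp⟩ hpB
  have hp' := mem_orthogonalOfPair.1 hp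
  refine Subtype.ext (hsep p fun v => ?_)
  rw [eq_smul_add_smul_add_projOrthogonalOfPair (u := u) (w := w) hB v]
  simp only [map_add, map_smul, smul_eq_mul, ← hB.neg u p, ← hB.neg w p, hp'.1, hp'.2]
  simpa using hpB ⟨_, projOrthogonalOfPair_mem hB huw v⟩

theorem exists_equiv_standardForm_of_orthogonalOfPair {n : ℕ}
    (f : orthogonalOfPair B u w ≃ₗ[R] (Fin n → R) × (Fin n → R))
    (hf : ∀ p q, standardForm (f p) (f q) = B p q) :
    ∃ g : V ≃ₗ[R] (Fin (n + 1) → R) × (Fin (n + 1) → R),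
      ∀ v v', standardForm (g v) (g v') = B v v' := by
  let g := equivProdOrthogonalOfPair hB huw ≪≫ₗ (LinearEquiv.refl R (R × R)).prodCongr f ≪≫ₗ
    LinearEquiv.prodProdProdComm R R R _ _ ≪≫ₗ
    (Fin.consLinearEquiv R fun _ => R).prodCongr (Fin.consLinearEquiv R fun _ => R)
  have hg : ∀ x, g x = (Fin.cons (B u x) (f ⟨_, projOrthogonalOfPair_mem hB huw x⟩).1,
      Fin.cons (B x w) (f ⟨_, projOrthogonalOfPair_mem hB huw x⟩).2) := fun x => rfl
  refine ⟨g, fun v v' => ?_⟩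
  rw [hg, hg, standardForm_cons, hf, apply_eq_add_apply_projOrthogonalOfPair hB huw v v']

end OrthogonalOfPair

theorem sum_fin_add_two {M : Type*} [AddCommMonoid M] {k : ℕ} (f : Fin (k + 2) → M) :
    ∑ i, f i = f 0 + f 1 + ∑ j : Fin k, f j.succ.succ := by
  simp only [Fin.sum_univ_succ, Fin.succ_zero_eq_one, add_assoc]

section BasisOrthogonalOfPair

variable {R V : Type*} [CommRing R] [AddCommGroup V] [Module R V]
  {B : V →ₗ[R] V →ₗ[R] R} (hB : B.IsAlt) {k : ℕ} (b : Basis (Fin (k + 2)) R V)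
  (hb : B (b 0) (b 1) = 1)

noncomputable def basisOrthogonalOfPair : Basis (Fin k) R (orthogonalOfPair B (b 0) (b 1)) :=
  Basis.mk (v := fun j => ⟨_, projOrthogonalOfPair_mem hB hb (b j.succ.succ)⟩)
    (by
      refine Fintype.linearIndependent_iff.2 fun g hg j => ?_
      set y := ∑ i, g i • b i.succ.succ
      have hy : projOrthogonalOfPair B (b 0) (b 1) y = 0 := by
        simpa [y, map_sum] using congrArg Subtype.val hg
      have := Fintype.linearIndependent_iff.1 b.linearIndependent
        (Fin.cons (-B y (b 1)) (Fin.cons (B y (b 0)) g)) (by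
          rw [sum_fin_add_two, ← hy, projOrthogonalOfPair_apply]
          simp [y]
          module) j.succ.succ
      simpa using this)
    (by
      rintro ⟨p, hp⟩ -
      rw [Submodule.mem_span_range_iff_exists_fun]
      refine ⟨fun j => b.repr p j.succ.succ, Subtype.ext ?_⟩
      calc _ = projOrthogonalOfPair B (b 0) (b 1) (∑ i, b.repr p i • b i) := by
            rw [map_sum, sum_fin_add_two]
            simp [projOrthogonalOfPair_left hB hb, projOrthogonalOfPair_right hB hb]
        _ = p := by rw [b.sum_repr, projOrthogonalOfPair_of_mem hB hp])

end BasisOrthogonalOfPair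

section SwapUpdateCol

variable {R ι : Type*} [CommRing R] [DecidableEq ι]

def swapUpdateCol (v : ι → R) (j k : ι) : Matrix ι ι R :=
  ((1 : Matrix ι ι R).updateCol k v).submatrix id (Equiv.swap j k)

theorem swapUpdateCol_apply_left (v : ι → R) (j k i : ι) : swapUpdateCol v j k i j = v i := by
  simp [swapUpdateCol]

theorem swapUpdateCol_apply_of_ne (v : ι → R) {j k l : ι} (hlj : l ≠ j) (hlk : l ≠ k) (i : ι) :
    swapUpdateCol v j k i l = (1 : Matrix ι ι R) i l := by
  simp [swapUpdateCol, Equiv.swap_apply_of_ne_of_ne hlj hlk, hlk]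

theorem det_swapUpdateCol [Fintype ι] (v : ι → R) (j k : ι) :
    (swapUpdateCol v j k).det = Equiv.Perm.sign (Equiv.swap j k) * v k := by
  rw [swapUpdateCol, Matrix.det_permute', ← Matrix.cramer_apply, Matrix.cramer_one]
  rfl

theorem abs_det_swapUpdateCol [Fintype ι] (v : ι → ℝ) (j k : ι) :
    |(swapUpdateCol v j k).det| = |v k| := by
  rw [det_swapUpdateCol, abs_mul]
  rcases Int.units_eq_one_or (Equiv.Perm.sign (Equiv.swap j k)) with h | h <;> simp [h]

theorem abs_swapUpdateCol_le (v : ι → ℝ) (j k i l : ι) :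
    |swapUpdateCol v j k i l| ≤ |v i| + 1 := by
  simp only [swapUpdateCol, Matrix.submatrix_apply, Matrix.updateCol_apply, id_eq,
    Matrix.one_apply]
  split_ifs <;> simp [add_nonneg]

end SwapUpdateCol

instance : CoeFun moderateSubring (fun _ => ℝ → ℝ) := ⟨fun r => r.1⟩

noncomputable def mk : moderateSubring →+* RTilde := Ideal.Quotient.mk negligibleIdeal

theorem mk_surjective : Function.Surjective mk := Ideal.Quotient.mk_surjective

theorem mk_eq_zero_iff {r : moderateSubring} : mk r = 0 ↔ Negligible r :=
  Ideal.Quotient.eq_zero_iff_mem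

theorem eventually_nhdsGT_zero_iff {P : ℝ → Prop} :
    (∀ᶠ ε in 𝓝[>] (0 : ℝ), P ε) ↔ ∃ ε₀ : ℝ, 0 < ε₀ ∧ ∀ ε : ℝ, 0 < ε → ε ≤ 1 → ε < ε₀ → P ε := by
  rw [(nhdsGT_basis (0 : ℝ)).eventually_iff]
  constructor
  · rintro ⟨ε₀, hε₀, h⟩
    exact ⟨ε₀, hε₀, fun ε hε _ hεε₀ => h ⟨hε, hεε₀⟩⟩
  · rintro ⟨ε₀, hε₀, h⟩
    refine ⟨min ε₀ 1, lt_min hε₀ one_pos, fun ε hε => h ε hε.1 ?_ ?_⟩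
    · exact (hε.2.trans_le (min_le_right _ _)).le
    · exact hε.2.trans_le (min_le_left _ _)

theorem moderate_iff {r : ℝ → ℝ} :
    Moderate r ↔ ∃ N : ℕ, ∃ C > 0, ∀ᶠ ε in 𝓝[>] (0 : ℝ), |r ε| ≤ C / ε ^ N := by
  simp only [Moderate, eventually_nhdsGT_zero_iff, gt_iff_lt]

theorem negligible_iff {r : ℝ → ℝ} :
    Negligible r ↔ ∀ m : ℕ, ∃ C > 0, ∀ᶠ ε in 𝓝[>] (0 : ℝ), |r ε| ≤ C * ε ^ m := by
  simp only [Negligible, eventually_nhdsGT_zero_iff, gt_iff_lt]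

theorem mk_eq_mk_of_eventuallyEq {r s : moderateSubring}
    (h : (r : ℝ → ℝ) =ᶠ[𝓝[>] 0] s) : mk r = mk s := by
  rw [← sub_eq_zero, ← map_sub, mk_eq_zero_iff, negligible_iff]
  refine fun m => ⟨1, one_pos, ?_⟩
  filter_upwards [h, self_mem_nhdsWithin] with ε hε (hε₀ : 0 < ε)
  simp [hε, hε₀.le]

theorem moderate_of_abs_le_abs_add_one {r s : ℝ → ℝ} (hs : Moderate s)
    (h : ∀ ε, |r ε| ≤ |s ε| + 1) : Moderate r := by
  obtain ⟨N, C, hC, hs⟩ := moderate_iff.1 hs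
  refine moderate_iff.2 ⟨N, C + 1, by positivity, ?_⟩
  filter_upwards [hs, Ioo_mem_nhdsGT one_pos] with ε hsε hε
  have h1 : 1 ≤ 1 / ε ^ N := one_le_one_div (pow_pos hε.1 N) (pow_le_one₀ hε.1.le hε.2.le)
  calc |r ε| ≤ |s ε| + 1 := h ε
    _ ≤ C / ε ^ N + 1 / ε ^ N := add_le_add hsε h1
    _ = (C + 1) / ε ^ N := by rw [add_div]

theorem exists_pow_le_abs_of_isUnit_mk {r : moderateSubring} (hr : IsUnit (mk r)) :
    ∃ N : ℕ, ∀ᶠ ε in 𝓝[>] (0 : ℝ), ε ^ N ≤ |r ε| := by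
  obtain ⟨y, hy⟩ := hr.exists_right_inv
  obtain ⟨t, rfl⟩ := mk_surjective y
  have hrt : Negligible (r * t - 1 : moderateSubring) := by
    rw [← mk_eq_zero_iff, map_sub, map_mul, hy, map_one, sub_self]
  obtain ⟨C, hC, hrt⟩ := negligible_iff.1 hrt 1
  obtain ⟨M, C', hC', ht⟩ := moderate_iff.1 t.2
  refine ⟨M + 1, ?_⟩
  filter_upwards [hrt, ht, Ioo_mem_nhdsGT (by positivity : (0 : ℝ) < 1 / (2 * C)),
    Ioo_mem_nhdsGT (by positivity : (0 : ℝ) < 1 / (2 * C'))] with ε hrtε htε hεC hεC'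
  have hε : 0 < ε := hεC.1
  replace hεC : 2 * C * ε < 1 := (lt_div_iff₀' (by positivity)).1 hεC.2
  replace hεC' : 2 * C' * ε < 1 := (lt_div_iff₀' (by positivity)).1 hεC'.2
  have hrt' : 1 / 2 ≤ |r ε| * |t ε| := by
    simp only [AddSubgroupClass.coe_sub, Subring.coe_mul, OneMemClass.coe_one, Pi.sub_apply,
      Pi.mul_apply, Pi.one_apply, pow_one] at hrtε
    rw [← abs_mul]
    have := abs_sub_abs_le_abs_sub 1 (r ε * t ε)
    rw [abs_one, abs_sub_comm] at this
    linarith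
  have ht' : |t ε| * ε ^ M ≤ C' := (le_div_iff₀ (pow_pos hε M)).1 htε
  rw [pow_succ]
  nlinarith [abs_nonneg (r ε), abs_nonneg (t ε), pow_pos hε M,
    mul_le_mul_of_nonneg_left ht' (abs_nonneg (r ε))]

theorem isUnit_mk_of_pow_le_abs {r : moderateSubring} {N : ℕ}
    (hN : ∀ᶠ ε in 𝓝[>] (0 : ℝ), ε ^ N ≤ |r ε|) : IsUnit (mk r) := by
  have hinv : Moderate (fun ε => (r ε)⁻¹) := by
    refine moderate_iff.2 ⟨N, 1, one_pos, ?_⟩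
    filter_upwards [hN, self_mem_nhdsWithin] with ε hε (hε₀ : 0 < ε)
    rw [abs_inv, one_div]
    exact inv_anti₀ (pow_pos hε₀ N) hε
  refine IsUnit.of_mul_eq_one (mk ⟨_, hinv⟩) ?_
  rw [← map_mul, ← map_one mk]
  apply mk_eq_mk_of_eventuallyEq
  filter_upwards [hN, self_mem_nhdsWithin] with ε hε (hε₀ : 0 < ε)
  have hr : r ε ≠ 0 := abs_pos.1 ((pow_pos hε₀ N).trans_le hε)
  simp [hr]

theorem isUnit_mk_iff {r : moderateSubring} :
    IsUnit (mk r) ↔ ∃ N : ℕ, ∀ᶠ ε in 𝓝[>] (0 : ℝ), ε ^ N ≤ |r ε| :=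
  ⟨exists_pow_le_abs_of_isUnit_mk, fun ⟨_, hN⟩ => isUnit_mk_of_pow_le_abs hN⟩

theorem exists_tendsto_abs_lt_pow_of_not_isUnit {r : moderateSubring} (hr : ¬IsUnit (mk r)) :
    ∃ s : ℕ → ℝ, Tendsto s atTop (𝓝[>] 0) ∧ (∀ k, s k ∈ Set.Ioc 0 1) ∧
      ∀ k, |r (s k)| < s k ^ k := by
  simp only [isUnit_mk_iff, not_exists, not_eventually, not_le] at hr
  have hseq : ∀ k : ℕ, ∃ ε ∈ Set.Ioo (0 : ℝ) (1 / (k + 1)), |r ε| < ε ^ k := fun k =>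
    ((hr k).and_eventually (Ioo_mem_nhdsGT (by positivity))).exists.imp fun ε h => ⟨h.2, h.1⟩
  choose s hs hrs using hseq
  refine ⟨s, tendsto_nhdsWithin_iff.2 ⟨?_, Eventually.of_forall fun k => (hs k).1⟩,
    fun k => ⟨(hs k).1, (hs k).2.le.trans ((div_le_one (by positivity)).2 (by simp))⟩, hrs⟩
  exact squeeze_zero (fun k => (hs k).1.le) (fun k => (hs k).2.le)
    tendsto_one_div_add_atTop_nhds_zero_nat

theorem moderate_indicator_one (S : Set ℝ) : Moderate (S.indicator 1) := by
  refine moderate_iff.2 ⟨0, 1, one_pos, Eventually.of_forall fun ε => ?_⟩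
  by_cases hε : ε ∈ S <;> simp [hε]

theorem isUnit_of_mem_nonZeroDivisors {x : RTilde} (hx : x ∈ nonZeroDivisors RTilde) :
    IsUnit x := by
  obtain ⟨r, rfl⟩ := mk_surjective x
  by_contra hr
  obtain ⟨s, hs_tendsto, hs, hrs⟩ := exists_tendsto_abs_lt_pow_of_not_isUnit hr
  set e : moderateSubring := ⟨_, moderate_indicator_one (Set.range s)⟩
  have he_ne : mk e ≠ 0 := by
    rw [Ne, mk_eq_zero_iff, negligible_iff]
    intro hneg
    obtain ⟨C, -, hC⟩ := hneg 1
    have hCs : Tendsto (fun k => C * s k) atTop (𝓝 0) := by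
      simpa using (tendsto_nhdsWithin_iff.1 hs_tendsto).1.const_mul C
    obtain ⟨k, hk, hk'⟩ :=
      ((hs_tendsto.eventually hC).and (hCs.eventually (gt_mem_nhds one_pos))).exists
    simp [e] at hk
    linarith
  have her : mk e * mk r = 0 := by
    rw [← map_mul, mk_eq_zero_iff, negligible_iff]
    refine fun m => ⟨1, one_pos, ?_⟩
    have hbefore : ∀ᶠ ε in 𝓝[>] (0 : ℝ), ∀ k ∈ Finset.range m, ε < s k :=
      (Finset.range m).eventually_all.2 fun k _ =>
        mem_of_superset (Ioo_mem_nhdsGT (hs k).1) fun _ h => h.2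
    filter_upwards [hbefore, self_mem_nhdsWithin] with ε hε (hε₀ : 0 < ε)
    by_cases hεs : ε ∈ Set.range s
    · obtain ⟨k, rfl⟩ := hεs
      have hkm : m ≤ k := by
        by_contra! hkm
        exact lt_irrefl _ (hε k (Finset.mem_range.2 hkm))
      simp only [e, Subring.coe_mul, Pi.mul_apply, Set.indicator_of_mem (Set.mem_range_self k),
        Pi.one_apply, one_mul]
      exact (hrs k).le.trans (pow_le_pow_of_le_one (hs k).1.le (hs k).2 hkm)
    · simp [e, hεs, hε₀.le]
  exact he_ne ((mem_nonZeroDivisors_iff_right.1 hx) _ her)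

theorem eq_zero_of_sum_sq_eq_zero {ι : Type*} [Fintype ι] {x : ι → RTilde}
    (h : ∑ i, x i ^ 2 = 0) (i : ι) : x i = 0 := by
  choose ρ hρ using fun i => mk_surjective (x i)
  obtain rfl : x = fun i => mk (ρ i) := funext fun i => (hρ i).symm
  simp only [← map_pow, ← map_sum, mk_eq_zero_iff, negligible_iff] at h
  rw [mk_eq_zero_iff, negligible_iff]
  intro m
  obtain ⟨C, hC, hsum⟩ := h (2 * m)
  refine ⟨C + 1, by positivity, ?_⟩
  filter_upwards [hsum, self_mem_nhdsWithin] with ε hε (hε₀ : 0 < ε)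
  have hsq : ρ i ε ^ 2 ≤ ∑ j, ρ j ε ^ 2 :=
    Finset.single_le_sum (f := fun j => ρ j ε ^ 2) (fun j _ => sq_nonneg _) (Finset.mem_univ i)
  simp only [AddSubmonoidClass.coe_finsetSum, SubmonoidClass.coe_pow, Finset.sum_apply,
    Pi.pow_apply] at hε
  rw [abs_of_nonneg (Finset.sum_nonneg fun j _ => sq_nonneg _)] at hε
  refine abs_le_of_sq_le_sq ?_ (by positivity)
  calc ρ i ε ^ 2 ≤ C * ε ^ (2 * m) := hsq.trans hε
    _ ≤ (C + 1) ^ 2 * ε ^ (2 * m) := by gcongr; nlinarith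
    _ = ((C + 1) * ε ^ m) ^ 2 := by ring

theorem isUnit_two : IsUnit (2 : RTilde) := by
  rw [show (2 : RTilde) = mk (1 + 1) by rw [map_add, map_one]; norm_num, isUnit_mk_iff]
  refine ⟨0, Eventually.of_forall fun ε => ?_⟩
  simp only [pow_zero, Subring.coe_add, OneMemClass.coe_one, Pi.add_apply, Pi.one_apply]
  norm_num

theorem isAlt_of_skew {V : Type*} [AddCommGroup V] [Module RTilde V]
    {σ : V →ₗ[RTilde] V →ₗ[RTilde] RTilde} (hσ : ∀ v w, σ v w = - σ w v) : σ.IsAlt := by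
  intro v
  have h2 : 2 * σ v v = 0 := by
    rw [two_mul]
    nth_rewrite 1 [hσ]
    exact neg_add_cancel _
  exact isUnit_two.mul_right_eq_zero.1 h2

theorem det_apply_eq_det_map {ι : Type*} [Fintype ι] [DecidableEq ι]
    (M : Matrix ι ι moderateSubring) (ε : ℝ) : M.det ε = (M.map fun r => r ε).det :=
  RingHom.map_det ((Pi.evalRingHom (fun _ : ℝ => ℝ) ε).comp moderateSubring.subtype) M

theorem exists_pow_le_abs_of_isUnit_sum_sq {ι : Type*} [Fintype ι] (ρ : ι → moderateSubring)
    (k : ℝ → ι) (hk : ∀ ε i, |ρ i ε| ≤ |ρ (k ε) ε|) (h : IsUnit (∑ i, mk (ρ i) ^ 2)) :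
    ∃ N : ℕ, ∀ᶠ ε in 𝓝[>] (0 : ℝ), ε ^ N ≤ |ρ (k ε) ε| := by
  simp only [← map_pow, ← map_sum, isUnit_mk_iff] at h
  obtain ⟨N, hN⟩ := h
  set c : ℝ := (Fintype.card ι : ℝ)
  have hc : 0 < c := Nat.cast_pos.2 (Fintype.card_pos_iff.2 ⟨k 0⟩)
  refine ⟨N + 1, ?_⟩
  filter_upwards [hN, Ioo_mem_nhdsGT (one_div_pos.2 hc), Ioo_mem_nhdsGT one_pos]
    with ε hε hεc hε1
  have hsum : ∑ i, ρ i ε ^ 2 ≤ c * |ρ (k ε) ε| ^ 2 := by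
    rw [← nsmul_eq_mul]
    refine Finset.sum_le_card_nsmul _ _ _ fun i _ => ?_
    rw [← sq_abs]
    exact pow_le_pow_left₀ (abs_nonneg _) (hk ε i) 2
  simp only [AddSubmonoidClass.coe_finsetSum, SubmonoidClass.coe_pow, Finset.sum_apply,
    Pi.pow_apply, abs_of_nonneg (Finset.sum_nonneg fun i _ => sq_nonneg (ρ i ε))] at hε
  have hεc' : c * ε ≤ 1 := by
    have := hεc.2.le
    rw [le_div_iff₀ hc] at this
    linarith
  have hpow : ε * ε ^ N ≤ |ρ (k ε) ε| ^ 2 := by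
    refine le_of_mul_le_mul_left ?_ hc
    nlinarith [pow_pos hε1.1 N]
  have hsq : (ε ^ (N + 1)) ^ 2 ≤ |ρ (k ε) ε| ^ 2 :=
    calc (ε ^ (N + 1)) ^ 2 ≤ ε ^ (N + 1) :=
          pow_le_of_le_one (pow_nonneg hε1.1.le _) (pow_le_one₀ hε1.1.le hε1.2.le) two_ne_zero
      _ = ε * ε ^ N := pow_succ' ε N
      _ ≤ |ρ (k ε) ε| ^ 2 := hpow
  exact (pow_le_pow_iff_left₀ (pow_nonneg hε1.1.le _) (abs_nonneg _) two_ne_zero).1 hsq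

theorem exists_isUnit_det_col_eq {ι : Type*} [Fintype ι] [DecidableEq ι] {d : ι → RTilde}
    (hd : IsUnit (∑ i, d i ^ 2)) {i₀ j : ι} (hij : i₀ ≠ j) (hd₀ : d i₀ = 0) :
    ∃ P : Matrix ι ι RTilde, IsUnit P.det ∧ (∀ i, P i i₀ = (1 : Matrix ι ι RTilde) i i₀) ∧
      ∀ i, P i j = d i := by
  obtain ⟨ρ, hρ, hρ₀⟩ : ∃ ρ : ι → moderateSubring, (∀ i, mk (ρ i) = d i) ∧ ρ i₀ = 0 := by
    choose ρ hρ using fun i => mk_surjective (d i)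
    refine ⟨Function.update ρ i₀ 0, fun i => ?_, Function.update_self ..⟩
    rcases eq_or_ne i i₀ with rfl | hi
    · simp [hd₀]
    · simp [hi, hρ]
  have : Nonempty ι := ⟨i₀⟩
  choose k hk using fun ε => Finite.exists_max fun i => |ρ i ε|
  obtain ⟨N, hN⟩ := exists_pow_le_abs_of_isUnit_sum_sq ρ k hk (by simpa only [hρ] using hd)
  have hk₀ : ∀ᶠ ε in 𝓝[>] (0 : ℝ), k ε ≠ i₀ := by
    filter_upwards [hN, self_mem_nhdsWithin] with ε hε (hε₀ : 0 < ε) hkε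
    rw [hkε, hρ₀] at hε
    exact (pow_pos hε₀ N).not_ge (by simpa using hε)
  let P₀ : Matrix ι ι moderateSubring := fun i l =>
    ⟨fun ε => swapUpdateCol (fun i => ρ i ε) j (k ε) i l,
      moderate_of_abs_le_abs_add_one (ρ i).2 fun ε => abs_swapUpdateCol_le _ _ _ _ _⟩
  refine ⟨P₀.map mk, ?_, fun i => ?_, fun i => (congrArg mk (Subtype.ext (funext fun ε =>
    swapUpdateCol_apply_left _ _ _ _))).trans (hρ i)⟩
  · rw [← RingHom.mapMatrix_apply, ← RingHom.map_det, isUnit_mk_iff]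
    refine ⟨N, hN.mono fun ε hε => ?_⟩
    rwa [det_apply_eq_det_map,
      show (P₀.map fun r => r ε) = swapUpdateCol (fun i => ρ i ε) j (k ε) from rfl,
      abs_det_swapUpdateCol]
  · calc mk (P₀ i i₀) = mk ((1 : Matrix ι ι moderateSubring) i i₀) := by
          refine mk_eq_mk_of_eventuallyEq (hk₀.mono fun ε hε => ?_)
          change swapUpdateCol _ _ _ i i₀ = _
          rw [swapUpdateCol_apply_of_ne _ hij hε.symm]
          by_cases hi : i = i₀ <;> simp [Matrix.one_apply, hi]
      _ = (1 : Matrix ι ι RTilde) i i₀ := by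
          by_cases hi : i = i₀ <;> simp [Matrix.one_apply, hi]

section Basis

variable {V : Type*} [AddCommGroup V] [Module RTilde V]

theorem exists_basis_apply_eq_sum_smul {ι : Type*} [Fintype ι] [DecidableEq ι]
    (b : Basis ι RTilde V) {d : ι → RTilde} (hd : IsUnit (∑ i, d i ^ 2)) {i₀ j : ι}
    (hij : i₀ ≠ j) (hd₀ : d i₀ = 0) :
    ∃ b' : Basis ι RTilde V, b' i₀ = b i₀ ∧ b' j = ∑ i, d i • b i := by
  obtain ⟨P, hP, hPi₀, hPj⟩ := exists_isUnit_det_col_eq hd hij hd₀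
  refine ⟨b.map (Matrix.toLinearEquiv b P hP), ?_, ?_⟩
  · simp [Matrix.toLin_self, hPi₀, Matrix.one_apply]
  · simp [Matrix.toLin_self, hPj]

variable {B : V →ₗ[RTilde] V →ₗ[RTilde] RTilde}

theorem isUnit_sum_sq_apply_basis {ι : Type*} [Fintype ι] (hsep : B.SeparatingLeft)
    (b : Basis ι RTilde V) (i : ι) : IsUnit (∑ j, B (b i) (b j) ^ 2) := by
  refine isUnit_of_mem_nonZeroDivisors (mem_nonZeroDivisors_iff_right.2 fun e he => ?_)
  have hrow : ∀ j, e * B (b i) (b j) = 0 := eq_zero_of_sum_sq_eq_zero (by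
    simp_rw [mul_pow, ← Finset.mul_sum, sq e, mul_assoc, he, mul_zero])
  have hzero : e • b i = 0 :=
    hsep _ fun v => LinearMap.congr_fun (b.ext (f₁ := B (e • b i)) (f₂ := 0) fun j => by
      simp [hrow j]) v
  simpa using congrArg (fun v => b.repr v i) hzero

theorem exists_basis_apply_zero_one_eq_one {k : ℕ} (hB : B.IsAlt) (hsep : B.SeparatingLeft)
    (b : Basis (Fin (k + 2)) RTilde V) :
    ∃ b' : Basis (Fin (k + 2)) RTilde V, B (b' 0) (b' 1) = 1 := by
  obtain ⟨s, hs⟩ := isUnit_sum_sq_apply_basis hsep b 0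
  have hd : ∑ j, ((s⁻¹ : RTildeˣ) * B (b 0) (b j) : RTilde) ^ 2 = ↑s⁻¹ := by
    simp_rw [mul_pow, ← Finset.mul_sum, ← hs, sq, mul_assoc, Units.inv_mul, mul_one]
  obtain ⟨b', hb'0, hb'1⟩ := exists_basis_apply_eq_sum_smul b
    (d := fun j => ↑s⁻¹ * B (b 0) (b j)) (by rw [hd]; exact s⁻¹.isUnit) zero_ne_one
    (by simp [hB.self_eq_zero])
  refine ⟨b', ?_⟩
  simp_rw [hb'0, hb'1, map_sum, map_smul, smul_eq_mul, mul_assoc, ← Finset.mul_sum, ← sq, ← hs,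
    Units.inv_mul]

end Basis

theorem exists_linearEquiv_standardForm {V : Type*} [AddCommGroup V] [Module RTilde V] (n : ℕ)
    (b : Basis (Fin (2 * n)) RTilde V) {B : V →ₗ[RTilde] V →ₗ[RTilde] RTilde} (hB : B.IsAlt)
    (hsep : B.SeparatingLeft) :
    ∃ f : V ≃ₗ[RTilde] (Fin n → RTilde) × (Fin n → RTilde),
      ∀ v v', standardForm (f v) (f v') = B v v' := by
  induction n generalizing V with
  | zero =>
    have : Subsingleton V :=
      not_nontrivial_iff_subsingleton.1 fun _ => b.index_nonempty.some.elim0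
    refine ⟨LinearEquiv.ofSubsingleton _ _, fun v v' => ?_⟩
    simp [standardForm, Subsingleton.elim v 0]
  | succ n ih =>
    obtain ⟨b', hb'⟩ :=
      exists_basis_apply_zero_one_eq_one (k := 2 * n) hB hsep (b.reindex (finCongr (by ring)))
    obtain ⟨f, hf⟩ := ih (basisOrthogonalOfPair hB b' hb') (fun p => hB p)
      (separatingLeft_restrict_orthogonalOfPair hB hb' hsep)
    exact exists_equiv_standardForm_of_orthogonalOfPair hB hb' f hf

/-- Every free symplectic `ℝ̃`-module of finite rank `2n` is symplectomorphic to the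
standard model `(T^*(ℝ̃ⁿ), ω̃)`, where
`ω̃((x,ξ),(y,η)) = ∑ y_j ξ_j - ∑ x_j η_j`. -/
theorem symplectomorphic_to_standard_model {V : Type*} [AddCommGroup V] [Module RTilde V]
    (n : ℕ) (b₀ : Module.Basis (Fin (2 * n)) RTilde V)
    (σ : V →ₗ[RTilde] V →ₗ[RTilde] RTilde) (hσ : IsSymplecticForm σ) :
    ∃ f : V ≃ₗ[RTilde] (Fin n → RTilde) × (Fin n → RTilde),
      ∀ v w : V,
        (∑ j, (f w).1 j * (f v).2 j) - (∑ j, (f v).1 j * (f w).2 j) = σ v w :=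
  exists_linearEquiv_standardForm n b₀ (isAlt_of_skew hσ.skew) hσ.nondeg

end Colombeau
end

section
/- Let $(V,\sigma)$ be a free symplectic $\widetilde{\mathbb{R}}$-module of finite rank. Then for every $\varphi$ in the dual module $V'=\mathrm{L}_{\widetilde{\mathbb{R}}}(V,\widetilde{\mathbb{R}})$ there exists a unique element $h_\varphi\in V$ (the Hamiltonian vector corresponding to $\varphi$) such that $\varphi(v)=\sigma(h_\varphi,v)$ for all $v\in V$. Furthermore, the map $\varphi\mapsto h_\varphi$ is an $\widetilde{\mathbb{R}}$-linear isomorphism from $V'$ onto $V$. -/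
/-! Nondegeneracy makes `σ : V → V'` injective, and composing with the isomorphism `V' ≃ V` given
by a basis yields an injective endomorphism of a free module of finite rank. By McCoy's theorem
its determinant is a non-zero-divisor, and in `ℝ̃` every non-zero-divisor is a unit: if `[r_ε]` is
not a unit, then `|r_ε| < ε^k` along a sequence `ε_k → 0`, and the indicator function of that
sequence is a non-negligible net annihilating `r`. Hence `σ` is bijective and `φ ↦ h_φ` is its
inverse. -/

open scoped BigOperators

namespace LinearMap

theorem det_mem_nonZeroDivisors_of_injective {R M : Type*} [CommRing R] [AddCommGroup M]
    [Module R M] [Module.Free R M] [Module.Finite R M] {f : M →ₗ[R] M}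
    (hf : Function.Injective f) : f.det ∈ nonZeroDivisors R := by
  classical
  let b := Module.Free.chooseBasis R M
  have hmulVec : ∀ x, (toMatrix b b f).mulVec (b.equivFun x) = b.equivFun (f x) :=
    toMatrix_mulVec_repr b b f
  have hinj : Function.Injective (toMatrix b b f).mulVec := fun v w hvw => by
    rw [← b.equivFun.apply_symm_apply v, ← b.equivFun.apply_symm_apply w, hmulVec, hmulVec]
      at hvw
    exact b.equivFun.symm.injective (hf (b.equivFun.injective hvw))
  rw [← det_toMatrix b, ← Matrix.nonsingular_iff_det_mem_nonZeroDivisors]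
  exact .of_linearIndependent_col (Matrix.mulVec_injective_iff.mp hinj)

end LinearMap

namespace Colombeau

open scoped nonZeroDivisors

theorem not_negligible_of_frequently_one_le_abs {r : ℝ → ℝ}
    (h : ∀ δ > 0, ∃ ε, 0 < ε ∧ ε ≤ 1 ∧ ε < δ ∧ 1 ≤ |r ε|) : ¬Negligible r := by
  intro hr
  obtain ⟨C, hC, ε₀, hε₀, hbound⟩ := hr 1
  obtain ⟨ε, hε, hε1, hεδ, hrε⟩ := h (min ε₀ C⁻¹) (by positivity)
  have hCε : C * ε < 1 := calc
    C * ε < C * C⁻¹ := by gcongr; exact hεδ.trans_le (min_le_right _ _)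
    _ = 1 := mul_inv_cancel₀ hC.ne'
  have := hbound ε hε hε1 (hεδ.trans_le (min_le_left _ _))
  rw [pow_one] at this
  linarith

theorem negligible_mul_indicator_range {r : ℝ → ℝ} {εs : ℕ → ℝ} (hpos : ∀ k, 0 < εs k)
    (hsmall : ∀ k, |r (εs k)| < εs k ^ k) :
    Negligible (r * (Set.range εs).indicator 1) := by
  intro m
  obtain ⟨ε₀, hε₀, hle⟩ : ∃ ε₀ > 0, ∀ k < m, ε₀ ≤ εs k := by
    induction m with
    | zero => exact ⟨1, one_pos, by simp⟩
    | succ m ih =>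
      obtain ⟨ε₀, hε₀, hle⟩ := ih
      refine ⟨min ε₀ (εs m), lt_min hε₀ (hpos m), fun k hk => ?_⟩
      rcases Nat.lt_succ_iff_lt_or_eq.mp hk with hk | rfl
      · exact (min_le_left _ _).trans (hle k hk)
      · exact min_le_right _ _
  refine ⟨1, one_pos, ε₀, hε₀, fun ε hε hε1 hεε₀ => ?_⟩
  by_cases hS : ε ∈ Set.range εs
  · obtain ⟨k, rfl⟩ := hS
    have hmk : m ≤ k := by
      by_contra! hkm
      exact (hle k hkm).not_gt hεε₀
    rw [Pi.mul_apply, Set.indicator_of_mem (Set.mem_range_self k), Pi.one_apply, mul_one,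
      one_mul]
    exact (hsmall k).le.trans (pow_le_pow_of_le_one hε.le hε1 hmk)
  · rw [Pi.mul_apply, Set.indicator_of_notMem hS, mul_zero, abs_zero]
    positivity

namespace RTilde

def mk : moderateSubring →+* RTilde := Ideal.Quotient.mk negligibleIdeal

theorem mk_surjective : Function.Surjective mk := Ideal.Quotient.mk_surjective

theorem mk_eq_zero_iff {r : moderateSubring} : mk r = 0 ↔ Negligible r :=
  Ideal.Quotient.eq_zero_iff_mem

theorem isUnit_mk_of_pow_le_abs {r : moderateSubring} {k : ℕ} {ε₀ : ℝ} (hε₀ : 0 < ε₀)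
    (h : ∀ ε : ℝ, 0 < ε → ε ≤ 1 → ε < ε₀ → ε ^ k ≤ |(r : ℝ → ℝ) ε|) : IsUnit (mk r) := by
  have hinv : Moderate (r : ℝ → ℝ)⁻¹ := ⟨k, 1, one_pos, ε₀, hε₀, fun ε hε hε1 hεε₀ => by
    rw [Pi.inv_apply, abs_inv, one_div]
    exact inv_anti₀ (pow_pos hε k) (h ε hε hε1 hεε₀)⟩
  refine .of_mul_eq_one (mk ⟨_, hinv⟩) ?_
  rw [← map_mul, ← map_one mk, ← sub_eq_zero, ← map_sub, mk_eq_zero_iff]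
  refine fun m => ⟨1, one_pos, ε₀, hε₀, fun ε hε hε1 hεε₀ => ?_⟩
  have hr : (r : ℝ → ℝ) ε ≠ 0 := fun h0 => by
    have := h ε hε hε1 hεε₀
    rw [h0, abs_zero] at this
    exact (pow_pos hε k).not_ge this
  simp only [AddSubgroupClass.coe_sub, Subring.coe_mul, OneMemClass.coe_one, Pi.sub_apply,
    Pi.mul_apply, Pi.inv_apply, mul_inv_cancel₀ hr, Pi.one_apply, sub_self, abs_zero, one_mul]
  positivity

theorem exists_abs_lt_pow_of_not_isUnit {r : moderateSubring} (hr : ¬IsUnit (mk r)) (k : ℕ)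
    {δ : ℝ} (hδ : 0 < δ) : ∃ ε, 0 < ε ∧ ε ≤ 1 ∧ ε < δ ∧ |(r : ℝ → ℝ) ε| < ε ^ k := by
  by_contra! h
  exact hr (isUnit_mk_of_pow_le_abs hδ h)

theorem isUnit_of_mem_nonZeroDivisors {r : RTilde} (hr : r ∈ RTilde⁰) : IsUnit r := by
  obtain ⟨r, rfl⟩ := mk_surjective r
  by_contra hu
  choose εs hpos hle1 hlt hsmall using fun k : ℕ =>
    exists_abs_lt_pow_of_not_isUnit hu k (Nat.one_div_pos_of_nat (n := k))
  have hmod : Moderate ((Set.range εs).indicator 1) := ⟨0, 1, one_pos, 1, one_pos,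
    fun ε _ _ _ => by by_cases h : ε ∈ Set.range εs <;> simp [h]⟩
  have hprod : mk ⟨_, hmod⟩ * mk r = 0 := by
    rw [← map_mul, mul_comm, mk_eq_zero_iff]
    exact negligible_mul_indicator_range hpos hsmall
  refine not_negligible_of_frequently_one_le_abs (fun δ hδ => ?_)
    (mk_eq_zero_iff.mp (mem_nonZeroDivisors_iff_right.mp hr _ hprod))
  obtain ⟨k, hk⟩ := exists_nat_one_div_lt hδ
  exact ⟨εs k, hpos k, hle1 k, (hlt k).trans hk, by simp⟩

end RTilde

theorem IsSymplecticForm.injective {V : Type*} [AddCommGroup V] [Module RTilde V]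
    {σ : V →ₗ[RTilde] V →ₗ[RTilde] RTilde} (hσ : IsSymplecticForm σ) : Function.Injective σ :=
  (injective_iff_map_eq_zero σ).mpr fun v hv =>
    hσ.nondeg v fun w => by rw [hv, LinearMap.zero_apply]

/-- In a free symplectic `ℝ̃`-module `(V,σ)` of finite rank, every `φ` in the dual
module `V' = L(V,ℝ̃)` has a unique Hamiltonian vector `h_φ ∈ V` with
`φ(v) = σ(h_φ, v)` for all `v ∈ V`, and `φ ↦ h_φ` is an `ℝ̃`-linear isomorphism
`V' → V`. -/
theorem exists_unique_hamiltonian_vector {V : Type*} [AddCommGroup V] [Module RTilde V]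
    [Module.Free RTilde V] [Module.Finite RTilde V]
    (σ : V →ₗ[RTilde] V →ₗ[RTilde] RTilde) (hσ : IsSymplecticForm σ) :
    (∀ φ : V →ₗ[RTilde] RTilde, ∃! h : V, ∀ v : V, φ v = σ h v) ∧
    ∃ T : (V →ₗ[RTilde] RTilde) ≃ₗ[RTilde] V,
      ∀ (φ : V →ₗ[RTilde] RTilde) (v : V), φ v = σ (T φ) v := by
  classical
  let e := (Module.Free.chooseBasis RTilde V).toDualEquiv
  have hunit : IsUnit (e.symm.toLinearMap ∘ₗ σ) :=
    (LinearMap.isUnit_iff_isUnit_det _).mpr <| RTilde.isUnit_of_mem_nonZeroDivisors <|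
      LinearMap.det_mem_nonZeroDivisors_of_injective (e.symm.injective.comp hσ.injective)
  have hbij : Function.Bijective σ := by
    simpa using e.bijective.comp ((Module.End.isUnit_iff _).mp hunit)
  let T := (LinearEquiv.ofBijective σ hbij).symm
  have hT : ∀ φ, σ (T φ) = φ := (LinearEquiv.ofBijective σ hbij).apply_symm_apply
  refine ⟨fun φ => ⟨T φ, fun v => by rw [hT], fun w hw => ?_⟩, T, fun φ v => by rw [hT]⟩
  exact hσ.injective (LinearMap.ext fun v => (hw v).symm.trans (by rw [hT]))

end Colombeau
end
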